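/- Let S be a Cu-semigroup satisfying O5 and O6, let J ⊆ S be an ideal, and let x ∈ S. Then for every functional λ ∈ F(S), (x̂ ∧ h_J)(λ) = sup { λ(z) : z ∈ J, z ≤ x }, where h_J(μ) = 0 if μ ≤ λ_J and ∞ otherwise, and the infimum defining ∧ is the Riesz–Kantorovich formula on F(S). -/

import Mathlib

/-!
Any decomposition `λ = λ₁ + λ₂` with `λ₂ = 0` on `J` gives `λ z = λ₁ z ≤ λ₁ x` for `z ∈ J`,
`z ≤ x`. Conversely, `λ` splits as `ρ + σ`, where `ρ u = sup {λ z : z ∈ J, z ≤ u}` is a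
functional by O6 and `σ u = sup {λ w - ρ w : w ≤ u, ρ w < ∞}` vanishes on `J`. By O5,
`w ↦ λ w - ρ w` is monotone wherever `ρ` is finite, which gives `λ = ρ + σ`, and O6 again
makes `σ` additive. This decomposition attains the infimum, with value `ρ x`.
-/

open scoped ENNReal

namespace CuFormal

variable {S : Type*} [AddCommMonoid S] [PartialOrder S]

/-- The algebra-free way-below relation: `x ≪ y` iff whenever `y ≤ sup yₙ` for an
increasing sequence with supremum, then `x ≤ yₙ` for some `n`. -/
def WayBelow (x y : S) : Prop :=
  ∀ f : ℕ → S, Monotone f → ∀ s : S, IsLUB (Set.range f) s → y ≤ s → ∃ n, x ≤ f n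

/-- Positively ordered monoid with addition monotone. -/
def PosOrdered : Prop :=
  (∀ x : S, (0 : S) ≤ x) ∧ ∀ a b c : S, b ≤ c → a + b ≤ a + c

/-- O1: every increasing sequence has a supremum. -/
def AxO1 : Prop := ∀ f : ℕ → S, Monotone f → ∃ s : S, IsLUB (Set.range f) s

/-- O2: every element is the supremum of a ≪-increasing sequence. -/
def AxO2 : Prop := ∀ x : S, ∃ f : ℕ → S, Monotone f ∧
  (∀ n, WayBelow (f n) (f (n + 1))) ∧ IsLUB (Set.range f) x

/-- O3 -/
def AxO3 : Prop := ∀ x₁ y₁ x₂ y₂ : S,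
  WayBelow x₁ y₁ → WayBelow x₂ y₂ → WayBelow (x₁ + x₂) (y₁ + y₂)

/-- O4 -/
def AxO4 : Prop := ∀ f g : ℕ → S, Monotone f → Monotone g →
  ∀ a b : S, IsLUB (Set.range f) a → IsLUB (Set.range g) b →
    IsLUB (Set.range fun n => f n + g n) (a + b)

/-- A Cu-semigroup: positively ordered monoid satisfying O1–O4. -/
def CuSemigroup : Prop :=
  PosOrdered (S := S) ∧ AxO1 (S := S) ∧ AxO2 (S := S) ∧ AxO3 (S := S) ∧ AxO4 (S := S)

/-- O5 -/
def AxO5 : Prop := ∀ x' x y w' w : S, WayBelow x' x → x ≤ y → WayBelow w' w →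
  x + w ≤ y → ∃ z : S, x' + z ≤ y ∧ y ≤ x + z ∧ WayBelow w' z

/-- O6 -/
def AxO6 : Prop := ∀ x' x y z : S, WayBelow x' x → x ≤ y + z →
  ∃ y' z' : S, x' ≤ y' + z' ∧ y' ≤ x ∧ y' ≤ y ∧ z' ≤ x ∧ z' ≤ z

/-- O7 -/
def AxO7 : Prop := ∀ x₁' x₁ x₂' x₂ w : S,
  WayBelow x₁' x₁ → x₁ ≤ w → WayBelow x₂' x₂ → x₂ ≤ w →
  ∃ x : S, WayBelow x₁' x ∧ WayBelow x₂' x ∧ x ≤ w ∧ x ≤ x₁ + x₂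

/-- An ideal: a downward hereditary subsemigroup closed under suprema of increasing
sequences. -/
def IsIdeal (J : Set S) : Prop :=
  (0 : S) ∈ J ∧ (∀ x y : S, x ∈ J → y ∈ J → x + y ∈ J) ∧
  (∀ x y : S, y ∈ J → x ≤ y → x ∈ J) ∧
  (∀ f : ℕ → S, Monotone f → (∀ n, f n ∈ J) →
    ∀ s : S, IsLUB (Set.range f) s → s ∈ J)

/-- Countably based. -/
def CountablyBased : Prop := ∃ B : Set S, B.Countable ∧
  ∀ x : S, ∃ f : ℕ → S, (∀ n, f n ∈ B) ∧ Monotone f ∧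
    (∀ n, WayBelow (f n) (f (n + 1))) ∧ IsLUB (Set.range f) x

/-- A functional on `S`: preserves `0`, addition, order and suprema of increasing
sequences. -/
def IsFunctional (l : S → ℝ≥0∞) : Prop :=
  l 0 = 0 ∧ (∀ x y : S, l (x + y) = l x + l y) ∧ Monotone l ∧
  (∀ f : ℕ → S, Monotone f → ∀ s : S, IsLUB (Set.range f) s → l s = ⨆ n, l (f n))

/-- `(x̂ ∧ ŷ)(λ) = inf { λ₁(x) + λ₂(y) : λ = λ₁ + λ₂ }`. -/
noncomputable def hatInf (x y : S) (l : S → ℝ≥0∞) : ℝ≥0∞ :=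
  sInf {t : ℝ≥0∞ | ∃ l₁ l₂ : S → ℝ≥0∞, IsFunctional l₁ ∧ IsFunctional l₂ ∧
    (∀ u : S, l u = l₁ u + l₂ u) ∧ t = l₁ x + l₂ y}

/-- Edwards' condition for the functional `l`. -/
def EdwardsFor (l : S → ℝ≥0∞) : Prop := ∀ x y : S,
  hatInf x y l = sSup {t : ℝ≥0∞ | ∃ z : S, z ≤ x ∧ z ≤ y ∧ t = l z}

/-- The ideal generated by a subset. -/
def idealGen (X : Set S) : Set S := ⋂₀ {J : Set S | IsIdeal J ∧ X ⊆ J}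


section PartialOrder

variable {P : Type*} [PartialOrder P] {x y z : P}

theorem WayBelow.trans_le (h : WayBelow x y) (hyz : y ≤ z) : WayBelow x z :=
  fun f hf s hs hzs => h f hf s hs (hyz.trans hzs)

theorem WayBelow.le (h : WayBelow x y) : x ≤ y := by
  obtain ⟨_, hn⟩ := h (fun _ => y) monotone_const y (by simp [isLUB_singleton]) le_rfl
  exact hn

theorem exists_monotone_wayBelow_isLUB (hO2 : AxO2 (S := P)) (x : P) :
    ∃ f : ℕ → P, Monotone f ∧ (∀ n, WayBelow (f n) x) ∧ IsLUB (Set.range f) x := by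
  obtain ⟨f, hf, hfwb, hfx⟩ := hO2 x
  exact ⟨f, hf, fun n => (hfwb n).trans_le (hfx.1 ⟨n + 1, rfl⟩), hfx⟩

noncomputable def idealPart (J : Set P) (l : P → ℝ≥0∞) (u : P) : ℝ≥0∞ :=
  sSup {t : ℝ≥0∞ | ∃ z : P, z ∈ J ∧ z ≤ u ∧ t = l z}

noncomputable def idealExcess (J : Set P) (l : P → ℝ≥0∞) (u : P) : ℝ≥0∞ :=
  l u - idealPart J l u

/-- Only `w` with `idealPart J l w < ∞` are taken, because the excess is additive only there
(`⊤ - ⊤ = 0`). -/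
noncomputable def idealComplement (J : Set P) (l : P → ℝ≥0∞) (u : P) : ℝ≥0∞ :=
  ⨆ w : {w : P // w ≤ u ∧ idealPart J l w ≠ ⊤}, idealExcess J l w

variable {J : Set P} {l : P → ℝ≥0∞} {u w : P}

theorem idealPart_mono : Monotone (idealPart J l) := by
  intro u v huv
  refine sSup_le ?_
  rintro _ ⟨z, hz, hzu, rfl⟩
  exact le_sSup ⟨z, hz, hzu.trans huv, rfl⟩

theorem le_idealPart (hz : z ∈ J) (hzu : z ≤ u) : l z ≤ idealPart J l u :=
  le_sSup ⟨z, hz, hzu, rfl⟩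

theorem idealPart_le (hl : Monotone l) (u : P) : idealPart J l u ≤ l u := by
  refine sSup_le ?_
  rintro _ ⟨z, -, hzu, rfl⟩
  exact hl hzu

theorem idealPart_of_mem (hl : Monotone l) (hu : u ∈ J) : idealPart J l u = l u :=
  (idealPart_le hl u).antisymm (le_idealPart hu le_rfl)

theorem idealPart_add_idealExcess (hl : Monotone l) (u : P) :
    idealPart J l u + idealExcess J l u = l u :=
  add_tsub_cancel_of_le (idealPart_le hl u)

theorem idealExcess_of_mem (hl : Monotone l) (hu : u ∈ J) : idealExcess J l u = 0 := by
  rw [idealExcess, idealPart_of_mem hl hu, tsub_self]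

theorem idealExcess_le_idealComplement (hwu : w ≤ u) (hw : idealPart J l w ≠ ⊤) :
    idealExcess J l w ≤ idealComplement J l u :=
  le_iSup_of_le ⟨w, hwu, hw⟩ le_rfl

theorem idealComplement_mono : Monotone (idealComplement J l) :=
  fun _ _ huv => iSup_le fun w => idealExcess_le_idealComplement (w.2.1.trans huv) w.2.2

theorem idealPart_le_of_eq_add {l₁ l₂ : P → ℝ≥0∞} (hl₁ : Monotone l₁)
    (hl : ∀ u, l u = l₁ u + l₂ u) (hl₂ : ∀ u ∈ J, l₂ u = 0) (x : P) :
    idealPart J l x ≤ l₁ x := by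
  refine sSup_le ?_
  rintro _ ⟨z, hz, hzx, rfl⟩
  rw [hl, hl₂ z hz, add_zero]
  exact hl₁ hzx

end PartialOrder

theorem PosOrdered.add_le_add (hS : PosOrdered (S := S)) {a b c d : S} (hac : a ≤ c)
    (hbd : b ≤ d) : a + b ≤ c + d :=
  calc a + b ≤ a + d := hS.2 _ _ _ hbd
    _ = d + a := add_comm _ _
    _ ≤ d + c := hS.2 _ _ _ hac
    _ = c + d := add_comm _ _

theorem wayBelow_zero_zero (hS : PosOrdered (S := S)) : WayBelow (0 : S) 0 :=
  fun _ _ _ _ _ => ⟨0, hS.1 _⟩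

section Functional

variable {l : S → ℝ≥0∞}

theorem IsFunctional.map_add (hl : IsFunctional l) (x y : S) : l (x + y) = l x + l y :=
  hl.2.1 x y

theorem IsFunctional.mono (hl : IsFunctional l) : Monotone l :=
  hl.2.2.1

theorem IsFunctional.exists_wayBelow_eq_iSup (hO2 : AxO2 (S := S)) (hl : IsFunctional l)
    (u : S) : ∃ f : ℕ → S, (∀ n, WayBelow (f n) u) ∧ l u = ⨆ n, l (f n) := by
  obtain ⟨f, hf, hfu, hfx⟩ := exists_monotone_wayBelow_isLUB hO2 u
  exact ⟨f, hfu, hl.2.2.2 f hf u hfx⟩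

theorem IsFunctional.le_of_forall_wayBelow (hO2 : AxO2 (S := S)) (hl : IsFunctional l)
    {u : S} {T : ℝ≥0∞} (h : ∀ w, WayBelow w u → l w ≤ T) : l u ≤ T := by
  obtain ⟨f, hfu, hlu⟩ := hl.exists_wayBelow_eq_iSup hO2 u
  exact hlu ▸ iSup_le fun n => h _ (hfu n)

end Functional

section Ideal

variable {J : Set S}

theorem IsIdeal.zero_mem (hJ : IsIdeal J) : (0 : S) ∈ J := hJ.1

theorem IsIdeal.add_mem (hJ : IsIdeal J) {x y : S} (hx : x ∈ J) (hy : y ∈ J) : x + y ∈ J :=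
  hJ.2.1 x y hx hy

theorem IsIdeal.mem_of_le (hJ : IsIdeal J) {x y : S} (hy : y ∈ J) (hxy : x ≤ y) : x ∈ J :=
  hJ.2.2.1 x y hy hxy

end Ideal

section IdealPart

variable {J : Set S} {l : S → ℝ≥0∞} {u v w : S}

theorem idealPart_zero (hl : IsFunctional l) : idealPart J l 0 = 0 :=
  le_antisymm ((idealPart_le hl.mono 0).trans_eq hl.1) bot_le

theorem idealPart_add (hS : PosOrdered (S := S)) (hO2 : AxO2 (S := S)) (hO6 : AxO6 (S := S))
    (hJ : IsIdeal J) (hl : IsFunctional l) (u v : S) :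
    idealPart J l (u + v) = idealPart J l u + idealPart J l v := by
  apply le_antisymm
  · refine sSup_le ?_
    rintro _ ⟨z, hz, hzuv, rfl⟩
    refine hl.le_of_forall_wayBelow hO2 fun w hwz => ?_
    obtain ⟨a, b, hab, haz, hau, hbz, hbv⟩ := hO6 w z u v hwz hzuv
    calc l w ≤ l a + l b := hl.map_add a b ▸ hl.mono hab
      _ ≤ idealPart J l u + idealPart J l v :=
        add_le_add (le_idealPart (hJ.mem_of_le hz haz) hau)
          (le_idealPart (hJ.mem_of_le hz hbz) hbv)
  · have hne (u : S) : {t : ℝ≥0∞ | ∃ z : S, z ∈ J ∧ z ≤ u ∧ t = l z}.Nonempty :=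
      ⟨_, 0, hJ.zero_mem, hS.1 u, rfl⟩
    rw [idealPart, idealPart, ENNReal.sSup_add (hne u)]
    refine iSup₂_le ?_
    rintro _ ⟨a, ha, hau, rfl⟩
    rw [ENNReal.add_sSup (hne v)]
    refine iSup₂_le ?_
    rintro _ ⟨b, hb, hbv, rfl⟩
    exact hl.map_add a b ▸ le_idealPart (hJ.add_mem ha hb) (hS.add_le_add hau hbv)

theorem idealPart_isLUB (hO2 : AxO2 (S := S)) (hJ : IsIdeal J) (hl : IsFunctional l)
    {g : ℕ → S} (hg : Monotone g) {s : S} (hs : IsLUB (Set.range g) s) :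
    idealPart J l s = ⨆ n, idealPart J l (g n) := by
  refine le_antisymm ?_ (iSup_le fun n => idealPart_mono (hs.1 ⟨n, rfl⟩))
  refine sSup_le ?_
  rintro _ ⟨z, hz, hzs, rfl⟩
  refine hl.le_of_forall_wayBelow hO2 fun w hwz => ?_
  obtain ⟨n, hwn⟩ := hwz.trans_le hzs g hg s hs le_rfl
  exact le_iSup_of_le n (le_idealPart (hJ.mem_of_le hz hwz.le) hwn)

theorem isFunctional_idealPart (hS : PosOrdered (S := S)) (hO2 : AxO2 (S := S))
    (hO6 : AxO6 (S := S)) (hJ : IsIdeal J) (hl : IsFunctional l) :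
    IsFunctional (idealPart J l) :=
  ⟨idealPart_zero hl, idealPart_add hS hO2 hO6 hJ hl, idealPart_mono,
    fun _ hg _ hs => idealPart_isLUB hO2 hJ hl hg hs⟩

/-- For `w' ≪ w ≤ u`, O5 gives `c` with `w' + c ≤ u ≤ w + c`, so the part of `u` in `J`
exceeds that of `w` by at most `l c ≤ l u - l w'`. -/
theorem add_idealPart_le (hS : PosOrdered (S := S)) (hO2 : AxO2 (S := S))
    (hO5 : AxO5 (S := S)) (hO6 : AxO6 (S := S)) (hJ : IsIdeal J) (hl : IsFunctional l)
    (hwu : w ≤ u) : l w + idealPart J l u ≤ l u + idealPart J l w := by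
  obtain ⟨f, hfw, hlw⟩ := hl.exists_wayBelow_eq_iSup hO2 w
  rw [hlw, ENNReal.iSup_add]
  refine iSup_le fun n => ?_
  obtain ⟨c, hfc, hwc, -⟩ :=
    hO5 (f n) w u 0 0 (hfw n) hwu (wayBelow_zero_zero hS) ((add_zero w).trans_le hwu)
  have hpart : idealPart J l u ≤ idealPart J l w + l c :=
    calc idealPart J l u ≤ idealPart J l (w + c) := idealPart_mono hwc
      _ = idealPart J l w + idealPart J l c := idealPart_add hS hO2 hO6 hJ hl w c
      _ ≤ idealPart J l w + l c := by gcongr; exact idealPart_le hl.mono c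
  calc l (f n) + idealPart J l u ≤ l (f n) + (idealPart J l w + l c) := by gcongr
    _ = l (f n + c) + idealPart J l w := by rw [hl.map_add]; ring
    _ ≤ l u + idealPart J l w := by gcongr; exact hl.mono hfc

theorem idealExcess_mono (hS : PosOrdered (S := S)) (hO2 : AxO2 (S := S))
    (hO5 : AxO5 (S := S)) (hO6 : AxO6 (S := S)) (hJ : IsIdeal J) (hl : IsFunctional l)
    (hwu : w ≤ u) (hu : idealPart J l u ≠ ⊤) : idealExcess J l w ≤ idealExcess J l u := by
  refine tsub_le_iff_right.2 (ENNReal.le_of_add_le_add_right hu ?_)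
  rw [add_right_comm, add_comm (idealExcess J l u), idealPart_add_idealExcess hl.mono]
  exact add_idealPart_le hS hO2 hO5 hO6 hJ hl hwu

theorem idealExcess_add (hS : PosOrdered (S := S)) (hO2 : AxO2 (S := S))
    (hO6 : AxO6 (S := S)) (hJ : IsIdeal J) (hl : IsFunctional l)
    (hu : idealPart J l u ≠ ⊤) (hv : idealPart J l v ≠ ⊤) :
    idealExcess J l (u + v) = idealExcess J l u + idealExcess J l v := by
  rw [idealExcess, idealExcess, idealExcess, hl.map_add, idealPart_add hS hO2 hO6 hJ hl,
    (ENNReal.cancel_of_ne hu).tsub_add_tsub_comm (ENNReal.cancel_of_ne hv)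
      (idealPart_le hl.mono u) (idealPart_le hl.mono v)]

theorem idealExcess_le_of_forall_wayBelow (hO2 : AxO2 (S := S)) (hl : IsFunctional l)
    {T : ℝ≥0∞} (h : ∀ w', WayBelow w' w → idealExcess J l w' ≤ T) :
    idealExcess J l w ≤ T := by
  obtain ⟨f, hfw, hlw⟩ := hl.exists_wayBelow_eq_iSup hO2 w
  rw [idealExcess, hlw, ENNReal.iSup_sub]
  exact iSup_le fun n =>
    (tsub_le_tsub_left (idealPart_mono (hfw n).le) _).trans (h _ (hfw n))

end IdealPart

section IdealComplement

variable {J : Set S} {l : S → ℝ≥0∞} {u v : S}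

theorem idealComplement_of_mem (hJ : IsIdeal J) (hl : Monotone l) (hu : u ∈ J) :
    idealComplement J l u = 0 :=
  le_antisymm (iSup_le fun w => (idealExcess_of_mem hl (hJ.mem_of_le hu w.2.1)).le) bot_le

theorem idealComplement_zero (hJ : IsIdeal J) (hl : Monotone l) :
    idealComplement J l 0 = 0 :=
  idealComplement_of_mem hJ hl hJ.zero_mem

theorem idealPart_add_idealComplement (hS : PosOrdered (S := S)) (hO2 : AxO2 (S := S))
    (hO5 : AxO5 (S := S)) (hO6 : AxO6 (S := S)) (hJ : IsIdeal J) (hl : IsFunctional l)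
    (u : S) : idealPart J l u + idealComplement J l u = l u := by
  by_cases hu : idealPart J l u = ⊤
  · rw [hu, top_add, eq_comm, ← top_le_iff, ← hu]
    exact idealPart_le hl.mono u
  · have hcompl : idealComplement J l u = idealExcess J l u :=
      le_antisymm (iSup_le fun w => idealExcess_mono hS hO2 hO5 hO6 hJ hl w.2.1 hu)
        (idealExcess_le_idealComplement le_rfl hu)
    rw [hcompl, idealPart_add_idealExcess hl.mono]

theorem idealComplement_add (hS : PosOrdered (S := S)) (hO2 : AxO2 (S := S))
    (hO5 : AxO5 (S := S)) (hO6 : AxO6 (S := S)) (hJ : IsIdeal J) (hl : IsFunctional l)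
    (u v : S) :
    idealComplement J l (u + v) = idealComplement J l u + idealComplement J l v := by
  have hpart_add {a b : S} (ha : idealPart J l a ≠ ⊤) (hb : idealPart J l b ≠ ⊤) :
      idealPart J l (a + b) ≠ ⊤ := by
    rw [idealPart_add hS hO2 hO6 hJ hl]
    exact ENNReal.add_ne_top.2 ⟨ha, hb⟩
  apply le_antisymm
  · refine iSup_le fun ⟨w, hwuv, hw⟩ =>
      idealExcess_le_of_forall_wayBelow hO2 hl fun w' hw' => ?_
    obtain ⟨a, b, hab, haw, hau, hbw, hbv⟩ := hO6 w' w u v hw' hwuv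
    have ha : idealPart J l a ≠ ⊤ := ne_top_of_le_ne_top hw (idealPart_mono haw)
    have hb : idealPart J l b ≠ ⊤ := ne_top_of_le_ne_top hw (idealPart_mono hbw)
    calc idealExcess J l w' ≤ idealExcess J l (a + b) :=
          idealExcess_mono hS hO2 hO5 hO6 hJ hl hab (hpart_add ha hb)
      _ = idealExcess J l a + idealExcess J l b := idealExcess_add hS hO2 hO6 hJ hl ha hb
      _ ≤ idealComplement J l u + idealComplement J l v :=
          add_le_add (idealExcess_le_idealComplement hau ha)
            (idealExcess_le_idealComplement hbv hb)
  · have hne (u : S) : Nonempty {w : S // w ≤ u ∧ idealPart J l w ≠ ⊤} :=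
      ⟨⟨0, hS.1 u, by simp [idealPart_zero hl]⟩⟩
    have := hne u
    have := hne v
    refine ENNReal.iSup_add_iSup_le fun ⟨a, hau, ha⟩ ⟨b, hbv, hb⟩ => ?_
    rw [← idealExcess_add hS hO2 hO6 hJ hl ha hb]
    exact idealExcess_le_idealComplement (hS.add_le_add hau hbv) (hpart_add ha hb)

theorem idealComplement_isLUB (hO2 : AxO2 (S := S)) (hl : IsFunctional l)
    {g : ℕ → S} (hg : Monotone g) {s : S} (hs : IsLUB (Set.range g) s) :
    idealComplement J l s = ⨆ n, idealComplement J l (g n) := by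
  refine le_antisymm ?_ (iSup_le fun n => idealComplement_mono (hs.1 ⟨n, rfl⟩))
  refine iSup_le fun ⟨w, hws, hw⟩ => idealExcess_le_of_forall_wayBelow hO2 hl fun w' hw' => ?_
  obtain ⟨n, hwn⟩ := hw'.trans_le hws g hg s hs le_rfl
  exact le_iSup_of_le n (idealExcess_le_idealComplement hwn
    (ne_top_of_le_ne_top hw (idealPart_mono hw'.le)))

theorem isFunctional_idealComplement (hS : PosOrdered (S := S)) (hO2 : AxO2 (S := S))
    (hO5 : AxO5 (S := S)) (hO6 : AxO6 (S := S)) (hJ : IsIdeal J) (hl : IsFunctional l) :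
    IsFunctional (idealComplement J l) :=
  ⟨idealComplement_zero hJ hl.mono, idealComplement_add hS hO2 hO5 hO6 hJ hl,
    idealComplement_mono, fun _ hg _ hs => idealComplement_isLUB hO2 hl hg hs⟩

end IdealComplement

open Classical in
/-- `(x̂ ∧ h_J)(λ) = sup { λ(z) : z ∈ J, z ≤ x }`, where
`h_J(μ) = 0` if `μ ≤ λ_J` (i.e. `μ` vanishes on `J`) and `∞` otherwise. -/
theorem stmt14 {S : Type*} [AddCommMonoid S] [PartialOrder S]
    (hCu : CuSemigroup (S := S)) (hO5 : AxO5 (S := S)) (hO6 : AxO6 (S := S))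
    (J : Set S) (hJ : IsIdeal J) (x : S)
    (l : S → ℝ≥0∞) (hl : IsFunctional l) :
    sInf {t : ℝ≥0∞ | ∃ l₁ l₂ : S → ℝ≥0∞, IsFunctional l₁ ∧ IsFunctional l₂ ∧
        (∀ u : S, l u = l₁ u + l₂ u) ∧
        t = l₁ x + (if ∀ u ∈ J, l₂ u = 0 then 0 else (∞ : ℝ≥0∞))}
      = sSup {t : ℝ≥0∞ | ∃ z : S, z ∈ J ∧ z ≤ x ∧ t = l z} := by
  obtain ⟨hS, -, hO2, -, -⟩ := hCu
  refine le_antisymm (sInf_le ⟨idealPart J l, idealComplement J l,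
    isFunctional_idealPart hS hO2 hO6 hJ hl, isFunctional_idealComplement hS hO2 hO5 hO6 hJ hl,
    fun u => (idealPart_add_idealComplement hS hO2 hO5 hO6 hJ hl u).symm, ?_⟩) (le_sInf ?_)
  · rw [if_pos fun u hu => idealComplement_of_mem hJ hl.mono hu, add_zero]
    rfl
  · rintro _ ⟨l₁, l₂, hl₁, -, hdecomp, rfl⟩
    split_ifs with hl₂
    · rw [add_zero]
      exact idealPart_le_of_eq_add hl₁.mono hdecomp hl₂ x
    · simp

end CuFormal
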